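/- arXiv:2112.12065 — 2 statements merged into one kernel-verified Lean document; each statement's English description precedes it below -/
import Mathlib

section
/- For the Weyl group W of type C_r, identified with the semidirect product {±1}^r ⋊ S_r, let w_μ = (μ, σ_μ) where for μ ∈ {±1}^r the permutation σ_μ ∈ S_r is defined by σ_μ^{-1}(i) = #{1≤k≤i | μ_k = 1} if μ_i = 1, and σ_μ^{-1}(i) = r+1-#{1≤k≤i | μ_k = -1} if μ_i = -1. Then the length of w_μ (with respect to the Coxeter structure of the C_r Weyl group) equals Σ_{i=1}^r (r-i+1)·[μ_i = -1]. -/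
/-- The standard basis vector `ε_i` in `ℤ^r`. -/
def eps (r : ℕ) (i : Fin r) : Fin r → ℤ := fun j => if j = i then 1 else 0

/-- Positive roots of type `C_r`: `ε_i - ε_j`, `ε_i + ε_j` (`i < j`), and `2ε_i`. -/
def posRootsC (r : ℕ) : Set (Fin r → ℤ) :=
  {v | (∃ i j : Fin r, i < j ∧ (v = eps r i - eps r j ∨ v = eps r i + eps r j)) ∨
       (∃ i : Fin r, v = 2 • eps r i)}

/-- The signed permutation `(μ, σ)` acting on `ℤ^r`, sending `ε_j ↦ μ_{σ(j)} ε_{σ(j)}`. -/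
def sact {r : ℕ} (μ : Fin r → ℤ) (σ : Equiv.Perm (Fin r)) (v : Fin r → ℤ) : Fin r → ℤ :=
  fun i => μ i * v (σ.symm i)

/-- Coxeter length via the inversion formula `l(w) = #{α ∈ Δ⁺ : w(α) ∈ -Δ⁺}`. -/
noncomputable def lenC {r : ℕ} (μ : Fin r → ℤ) (σ : Equiv.Perm (Fin r)) : ℕ :=
  Set.ncard {α | α ∈ posRootsC r ∧ -(sact μ σ α) ∈ posRootsC r}

/-! The inversions of `w = (μ, σ_μ)` are exactly the roots `ε_{σ⁻¹ a} + ε_{σ⁻¹ b}` with `a ≤ b`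
and `μ_a = -1`: `w` sends such a root to `-(ε_a - μ_b ε_b)`, and no root `ε_i - ε_j` is inverted
because `σ_μ⁻¹` puts the positions with `μ = 1` first, in increasing order, and those with
`μ = -1` last, in decreasing order. For each `a` with `μ_a = -1` there are `r - a` choices of
`b ≥ a` (indices 0-based). -/

open Finset

section Roots

variable {r : ℕ}

lemma exists_pos_of_mem_posRootsC {v : Fin r → ℤ} (hv : v ∈ posRootsC r) : ∃ x, 0 < v x := by
  rcases hv with ⟨i, j, hij, rfl | rfl⟩ | ⟨i, rfl⟩
  · exact ⟨i, by simp [eps, hij.ne]⟩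
  · exact ⟨i, by simp [eps, hij.ne]⟩
  · exact ⟨i, by simp [eps]⟩

lemma eps_add_eps_mem_posRootsC (a b : Fin r) : eps r a + eps r b ∈ posRootsC r := by
  rcases lt_trichotomy a b with hab | rfl | hab
  · exact Or.inl ⟨a, b, hab, Or.inr rfl⟩
  · exact Or.inr ⟨a, (two_nsmul _).symm⟩
  · exact Or.inl ⟨b, a, hab, Or.inr (add_comm _ _)⟩

lemma neg_eps_add_eps_not_mem_posRootsC (a b : Fin r) : -(eps r a + eps r b) ∉ posRootsC r := by
  intro h
  obtain ⟨x, hx⟩ := exists_pos_of_mem_posRootsC h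
  simp only [Pi.neg_apply, Pi.add_apply, eps] at hx
  split_ifs at hx <;> omega

lemma eps_sub_eps_mem_posRootsC_iff {a b : Fin r} : eps r a - eps r b ∈ posRootsC r ↔ a < b := by
  refine ⟨?_, fun hab => Or.inl ⟨a, b, hab, Or.inl rfl⟩⟩
  rintro (⟨i, j, hij, h | h⟩ | ⟨i, h⟩)
  · have hi := congrFun h i
    have hj := congrFun h j
    simp only [Pi.sub_apply, eps, hij.ne, hij.ne', if_true, if_false] at hi hj
    split_ifs at hi hj <;> grind
  · have hi := congrFun h i
    have hj := congrFun h j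
    simp only [Pi.sub_apply, Pi.add_apply, eps, hij.ne, hij.ne', if_true, if_false] at hi hj
    split_ifs at hi hj <;> grind
  · have hi := congrFun h i
    simp only [Pi.sub_apply, Pi.smul_apply, eps, if_true, nsmul_eq_mul, Nat.cast_ofNat,
      mul_one] at hi
    split_ifs at hi <;> omega

lemma eps_add_eps_inj {a b c d : Fin r} (h : eps r a + eps r b = eps r c + eps r d) :
    a = c ∧ b = d ∨ a = d ∧ b = c := by
  have ha := congrFun h a
  have hb := congrFun h b
  simp only [Pi.add_apply, eps] at ha hb
  split_ifs at ha hb <;> omega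

end Roots

section SignedPerm

variable {r : ℕ} {μ : Fin r → ℤ} {σ : Equiv.Perm (Fin r)}

lemma sact_add (u v : Fin r → ℤ) : sact μ σ (u + v) = sact μ σ u + sact μ σ v := by
  funext x; simp [sact, mul_add]

lemma sact_sub (u v : Fin r → ℤ) : sact μ σ (u - v) = sact μ σ u - sact μ σ v := by
  funext x; simp [sact, mul_sub]

lemma sact_eps (i : Fin r) : sact μ σ (eps r i) = μ (σ i) • eps r (σ i) := by
  funext x
  simp only [sact, eps, Pi.smul_apply, smul_eq_mul, Equiv.symm_apply_eq]
  split_ifs with h <;> simp [h]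

def sumRoot (σ : Equiv.Perm (Fin r)) (a b : Fin r) : Fin r → ℤ :=
  eps r (σ.symm a) + eps r (σ.symm b)

lemma sact_sumRoot (a b : Fin r) : sact μ σ (sumRoot σ a b) = μ a • eps r a + μ b • eps r b := by
  simp [sumRoot, sact_add, sact_eps]

lemma sumRoot_injOn : Set.InjOn (fun q : Fin r × Fin r => sumRoot σ q.1 q.2) {q | q.1 ≤ q.2} := by
  rintro ⟨a, b⟩ (hab : a ≤ b) ⟨c, d⟩ (hcd : c ≤ d) h
  rcases eps_add_eps_inj h with ⟨hac, hbd⟩ | ⟨had, hbc⟩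
  · simp_all
  · simp only [EmbeddingLike.apply_eq_iff_eq] at had hbc
    subst had hbc
    simp [le_antisymm hab hcd]

variable (hμ : ∀ i, μ i = 1 ∨ μ i = -1)
include hμ

lemma neg_sact_sumRoot_mem {a b : Fin r} (hab : a ≤ b) (ha : μ a = -1) :
    -sact μ σ (sumRoot σ a b) ∈ posRootsC r := by
  rcases hμ b with hb | hb
  · have hab' : a < b := lt_of_le_of_ne hab (by rintro rfl; omega)
    simpa [sact_sumRoot, ha, hb, ← sub_eq_neg_add] using eps_sub_eps_mem_posRootsC_iff.2 hab'
  · simpa [sact_sumRoot, ha, hb] using eps_add_eps_mem_posRootsC b a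

lemma eq_neg_one_of_neg_sact_sumRoot_mem {a b : Fin r} (hab : a ≤ b)
    (h : -sact μ σ (sumRoot σ a b) ∈ posRootsC r) : μ a = -1 := by
  refine (hμ a).resolve_left fun ha => ?_
  rw [sact_sumRoot, ha, one_smul] at h
  rcases hμ b with hb | hb
  · rw [hb, one_smul] at h
    exact neg_eps_add_eps_not_mem_posRootsC a b h
  · rw [hb, neg_smul, one_smul, ← sub_eq_add_neg, neg_sub, eps_sub_eps_mem_posRootsC_iff] at h
    exact hab.not_gt h

lemma mem_image_sumRoot_of_neg_sact_mem {i j : Fin r}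
    (h : -sact μ σ (eps r i + eps r j) ∈ posRootsC r) :
    eps r i + eps r j ∈
      (fun q : Fin r × Fin r => sumRoot σ q.1 q.2) '' {q | μ q.1 = -1 ∧ q.1 ≤ q.2} := by
  wlog hle : σ i ≤ σ j generalizing i j
  · rw [add_comm] at h ⊢
    exact this h (le_of_not_ge hle)
  have hsum : eps r i + eps r j = sumRoot σ (σ i) (σ j) := by simp [sumRoot]
  rw [hsum] at h ⊢
  exact ⟨(σ i, σ j), ⟨eq_neg_one_of_neg_sact_sumRoot_mem hμ hle h, hle⟩, rfl⟩

end SignedPerm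

section SigmaMu

variable {r : ℕ} {μ : Fin r → ℤ} {σ : Equiv.Perm (Fin r)}

/-- `σ = σ_μ` in 0-based indices: `σ⁻¹` lists the positions where `μ = 1` in increasing order,
then those where `μ = -1` in decreasing order. -/
def IsSigmaMu (μ : Fin r → ℤ) (σ : Equiv.Perm (Fin r)) : Prop :=
  ∀ i : Fin r,
    (μ i = 1 → (σ.symm i : ℕ) + 1 = #{k | k ≤ i ∧ μ k = 1}) ∧
    (μ i = -1 → (σ.symm i : ℕ) + 1 = r + 1 - #{k | k ≤ i ∧ μ k = -1})

lemma card_filter_le_lt_card_filter_le {P : Fin r → Prop} [DecidablePred P] {a b : Fin r}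
    (hab : a < b) (hb : P b) : #{k | k ≤ a ∧ P k} < #{k | k ≤ b ∧ P k} := by
  refine card_lt_card ((ssubset_iff_of_subset ?_).2 ⟨b, by simp [hb], by simp [hab.not_ge]⟩)
  exact monotone_filter_right _ fun k _ hk => ⟨hk.1.trans hab.le, hk.2⟩

namespace IsSigmaMu

variable (hσ : IsSigmaMu μ σ)
include hσ

lemma symm_lt_symm_of_eq_one {a b : Fin r} (ha : μ a = 1) (hb : μ b = 1) (hab : a < b) :
    σ.symm a < σ.symm b := by
  have hlt := card_filter_le_lt_card_filter_le (P := (μ · = 1)) hab hb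
  have := (hσ a).1 ha
  have := (hσ b).1 hb
  rw [Fin.lt_def]
  omega

lemma symm_lt_symm_of_eq_neg_one {a b : Fin r} (ha : μ a = -1) (hb : μ b = -1) (hab : a < b) :
    σ.symm b < σ.symm a := by
  have hlt := card_filter_le_lt_card_filter_le (P := (μ · = -1)) hab hb
  have hle : #{k | k ≤ b ∧ μ k = -1} ≤ r := (card_filter_le _ _).trans_eq (card_fin r)
  have := (hσ a).2 ha
  have := (hσ b).2 hb
  rw [Fin.lt_def]
  omega

lemma symm_lt_symm_of_eq_one_of_eq_neg_one {a b : Fin r} (ha : μ a = 1) (hb : μ b = -1) :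
    σ.symm a < σ.symm b := by
  have hdisj : Disjoint (α := Finset (Fin r)) {k | k ≤ a ∧ μ k = 1} {k | k ≤ b ∧ μ k = -1} :=
    disjoint_filter.2 fun k _ hk hk' => by omega
  have hle := (card_union_of_disjoint hdisj).symm.trans_le
    ((card_le_univ _).trans_eq (Fintype.card_fin r))
  have := (hσ a).1 ha
  have := (hσ b).2 hb
  rw [Fin.lt_def]
  omega

variable (hμ : ∀ i, μ i = 1 ∨ μ i = -1)
include hμ

lemma neg_sact_eps_sub_eps_not_mem {i j : Fin r} (hij : i < j) :
    -sact μ σ (eps r i - eps r j) ∉ posRootsC r := by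
  intro h
  rw [sact_sub, sact_eps, sact_eps] at h
  replace hij : σ.symm (σ i) < σ.symm (σ j) := by simpa using hij
  generalize σ i = a at h hij
  generalize σ j = b at h hij
  rcases hμ a with ha | ha <;> rcases hμ b with hb | hb
  · simp only [ha, hb, one_smul, neg_sub, eps_sub_eps_mem_posRootsC_iff] at h
    exact (hσ.symm_lt_symm_of_eq_one hb ha h).asymm hij
  · simp only [ha, hb, one_smul, neg_smul, sub_neg_eq_add] at h
    exact neg_eps_add_eps_not_mem_posRootsC a b h
  · exact (hσ.symm_lt_symm_of_eq_one_of_eq_neg_one hb ha).asymm hij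
  · simp only [ha, hb, one_smul, neg_smul, neg_sub_neg, neg_sub,
      eps_sub_eps_mem_posRootsC_iff] at h
    exact (hσ.symm_lt_symm_of_eq_neg_one ha hb h).asymm hij

lemma inversions_eq :
    {α | α ∈ posRootsC r ∧ -sact μ σ α ∈ posRootsC r} =
      (fun q : Fin r × Fin r => sumRoot σ q.1 q.2) '' {q | μ q.1 = -1 ∧ q.1 ≤ q.2} := by
  ext α
  constructor
  · rintro ⟨⟨i, j, hij, rfl | rfl⟩ | ⟨i, rfl⟩, h⟩
    · exact absurd h (hσ.neg_sact_eps_sub_eps_not_mem hμ hij)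
    · exact mem_image_sumRoot_of_neg_sact_mem hμ h
    · rw [two_nsmul] at h ⊢
      exact mem_image_sumRoot_of_neg_sact_mem hμ h
  · rintro ⟨⟨a, b⟩, ⟨ha, hab⟩, rfl⟩
    exact ⟨eps_add_eps_mem_posRootsC _ _, neg_sact_sumRoot_mem hμ hab ha⟩

end IsSigmaMu

end SigmaMu

lemma ncard_setOf_eq_neg_one_le {r : ℕ} (μ : Fin r → ℤ) :
    {q : Fin r × Fin r | μ q.1 = -1 ∧ q.1 ≤ q.2}.ncard =
      ∑ a : Fin r, if μ a = -1 then r - (a : ℕ) else 0 := by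
  rw [Set.ncard_eq_toFinset_card', Set.toFinset_ofPred, card_filter, Fintype.sum_prod_type]
  refine sum_congr rfl fun a _ => ?_
  split_ifs with ha
  · simp [ha, filter_le_eq_Ici]
  · simp [ha]

/-- For `w_μ = (μ, σ_μ)` in the type `C_r` Weyl group `{±1}^r ⋊ S_r`, with `σ_μ` defined by
`σ_μ⁻¹(i) = #{k ≤ i : μ_k = 1}` if `μ_i = 1` and `σ_μ⁻¹(i) = r + 1 - #{k ≤ i : μ_k = -1}`
if `μ_i = -1` (1-based), the Coxeter length of `w_μ` equals `Σ_{i=1}^r (r-i+1)·[μ_i = -1]`. -/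
theorem stmt0 (r : ℕ) (μ : Fin r → ℤ) (hμ : ∀ i, μ i = 1 ∨ μ i = -1)
    (σ : Equiv.Perm (Fin r))
    (hσ : ∀ i : Fin r,
      (μ i = 1 → (σ.symm i : ℕ) + 1 =
        (Finset.univ.filter (fun k : Fin r => k ≤ i ∧ μ k = 1)).card) ∧
      (μ i = -1 → (σ.symm i : ℕ) + 1 =
        r + 1 - (Finset.univ.filter (fun k : Fin r => k ≤ i ∧ μ k = -1)).card)) :
    lenC μ σ = ∑ i : Fin r, (if μ i = -1 then r - (i : ℕ) else 0) := by
  rw [lenC, IsSigmaMu.inversions_eq hσ hμ,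
    (sumRoot_injOn.mono fun _ hq => hq.2).ncard_image, ncard_setOf_eq_neg_one_le]
end

section
/- (Vanishing of the analytically continued type-C character) Define for μ ∈ {±1}^r and t a formal/complex parameter: ch_{r,t} = Σ_{μ ∈ {±1}^r} (-1)^{L(μ)} Π_{i=1}^r τ_i^{μ_i(t + (r-i+1)[μ_i=-1] + Σ_{k=1}^i [μ_k=-1])} / Π_{1≤i≤j≤r} (1 - τ_i^{-1} τ_j^{-μ_i μ_j}), with L(μ) = Σ_i (r-i+1)[μ_i=-1]. Then ch_{r,t} = (-1)^{r(r+1)/2} · ch_{r, -r-1-t} for all t. -/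
open Finset

lemma sumC_aux (r : ℕ) : (∑ i ∈ Finset.range r, (r - i)) * 2 = r * (r + 1) := by
  induction r with
  | zero => simp
  | succ n ih =>
    rw [Finset.sum_range_succ']
    have : ∀ i ∈ Finset.range n, (n + 1 - (i + 1)) = n - i := fun i _ => by omega
    rw [Finset.sum_congr rfl this]
    simp only [Nat.sub_zero]
    ring_nf
    ring_nf at ih
    linarith

lemma sumC (r : ℕ) : (∑ i : Fin r, (r - (i : ℕ))) = r * (r + 1) / 2 := by
  rw [Fin.sum_univ_eq_sum_range]
  have := sumC_aux r
  omega

lemma cardC (r : ℕ) (b : Fin r → Bool) (i : Fin r) :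
    #(Finset.univ.filter fun k : Fin r => k ≤ i ∧ b k) +
      #(Finset.univ.filter fun k : Fin r => k ≤ i ∧ !b k) = (i : ℕ) + 1 := by
  have h1 : (Finset.univ.filter fun k : Fin r => k ≤ i ∧ b k)
      = (Finset.Iic i).filter (fun k => b k) := by
    ext k; simp [Finset.mem_Iic]
  have h2 : (Finset.univ.filter fun k : Fin r => k ≤ i ∧ !b k)
      = (Finset.Iic i).filter (fun k => ¬ (b k = true)) := by
    ext k; simp [Finset.mem_Iic]
  rw [h1, h2, Finset.card_filter_add_card_filter_not, Fin.card_Iic]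

noncomputable def chC {K : Type*} [Field K] (r : ℕ) (τ T : Fin r → K) : K :=
  ∑ b : Fin r → Bool,
    ((-1 : K) ^ (∑ i : Fin r, if b i then r - (i : ℕ) else 0) *
        ∏ i : Fin r,
          (if b i then
            (T i)⁻¹ * (τ i)⁻¹ ^
              ((r - (i : ℕ)) + (Finset.univ.filter (fun k : Fin r => k ≤ i ∧ b k)).card)
          else T i * τ i ^ (Finset.univ.filter (fun k : Fin r => k ≤ i ∧ b k)).card)) /
      ∏ p ∈ Finset.univ.filter (fun p : Fin r × Fin r => p.1 ≤ p.2),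
        (1 - (τ p.1)⁻¹ * (if b p.1 = b p.2 then (τ p.2)⁻¹ else τ p.2))

/-- Vanishing/symmetry of the analytically continued type-C character:
`ch_{r,t} = (-1)^{r(r+1)/2} · ch_{r,-r-1-t}`.  The substitution `t ↦ -r-1-t` is realized on
the formal symbols by `T i = τ_i^t ↦ τ_i^{-r-1}·(T i)⁻¹`. -/
theorem stmt15 {K : Type*} [Field K] (r : ℕ) (τ T : Fin r → K)
    (h0 : ∀ i, τ i ≠ 0) (h1 : ∀ i j : Fin r, τ i * τ j ≠ 1)
    (h2 : ∀ i j : Fin r, i ≠ j → τ i ≠ τ j) :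
    chC r τ T = (-1 : K) ^ (r * (r + 1) / 2) *
      chC r τ (fun i => (τ i)⁻¹ ^ (r + 1) * (T i)⁻¹) := by
  classical
  unfold chC
  rw [Finset.mul_sum]
  refine Fintype.sum_equiv
    ⟨fun b i => !(b i), fun b i => !(b i),
      fun b => funext fun i => Bool.not_not _, fun b => funext fun i => Bool.not_not _⟩
    _ _ fun b => ?_
  simp only [Equiv.coe_fn_mk]
  set T' : Fin r → K := fun i => (τ i)⁻¹ ^ (r + 1) * (T i)⁻¹ with hT'
  -- denominators agree
  have hD : (∏ p ∈ Finset.univ.filter (fun p : Fin r × Fin r => p.1 ≤ p.2),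
        (1 - (τ p.1)⁻¹ * (if (!b p.1) = (!b p.2) then (τ p.2)⁻¹ else τ p.2)))
      = ∏ p ∈ Finset.univ.filter (fun p : Fin r × Fin r => p.1 ≤ p.2),
        (1 - (τ p.1)⁻¹ * (if b p.1 = b p.2 then (τ p.2)⁻¹ else τ p.2)) := by
    refine Finset.prod_congr rfl fun p _ => ?_
    cases hb1 : b p.1 <;> cases hb2 : b p.2 <;> simp [hb1, hb2]
  -- signs
  have hL : (∑ i : Fin r, if b i then r - (i : ℕ) else 0) +
      (∑ i : Fin r, if !b i then r - (i : ℕ) else 0) = r * (r + 1) / 2 := by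
    rw [← Finset.sum_add_distrib, ← sumC r]
    refine Finset.sum_congr rfl fun i _ => ?_
    cases hb : b i <;> simp [hb]
  have hsign : (-1 : K) ^ (r * (r + 1) / 2) *
      (-1 : K) ^ (∑ i : Fin r, if !b i then r - (i : ℕ) else 0)
      = (-1 : K) ^ (∑ i : Fin r, if b i then r - (i : ℕ) else 0) := by
    rw [← hL, pow_add, mul_assoc, ← pow_add, ← two_mul, pow_mul, neg_one_sq, one_pow, mul_one]
  -- numerator products agree
  have hP : (∏ i : Fin r,
        (if (!b i) then
          (T' i)⁻¹ * (τ i)⁻¹ ^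
            ((r - (i : ℕ)) + (Finset.univ.filter (fun k : Fin r => k ≤ i ∧ !b k)).card)
        else T' i * τ i ^ (Finset.univ.filter (fun k : Fin r => k ≤ i ∧ !b k)).card))
      = ∏ i : Fin r,
        (if b i then
          (T i)⁻¹ * (τ i)⁻¹ ^
            ((r - (i : ℕ)) + (Finset.univ.filter (fun k : Fin r => k ≤ i ∧ b k)).card)
        else T i * τ i ^ (Finset.univ.filter (fun k : Fin r => k ≤ i ∧ b k)).card) := by
    refine Finset.prod_congr rfl fun i _ => ?_
    have hcd := cardC r b i
    set c := #(Finset.univ.filter fun k : Fin r => k ≤ i ∧ b k) with hc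
    set d := #(Finset.univ.filter fun k : Fin r => k ≤ i ∧ !b k) with hd
    have hir : (i : ℕ) < r := i.isLt
    have hr1 : r + 1 = (r - (i : ℕ)) + c + d := by omega
    have hτ := h0 i
    cases hb : b i
    · -- b i = false : LHS is the "true" branch with T', RHS the "false" branch with T
      simp only [hb, Bool.not_false, Bool.false_eq_true, Bool.true_eq_false, if_true, if_false,
        ite_true, ite_false, hT']
      rw [hr1]
      field_simp [hτ]
      have hc1 : τ i ^ c * (τ i)⁻¹ ^ c = 1 := by rw [← mul_pow, mul_inv_cancel₀ hτ, one_pow]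
      linear_combination (-(T i * (τ i)⁻¹ ^ (r - (i : ℕ)) * (τ i)⁻¹ ^ d)) * hc1
    · simp only [hb, Bool.not_true, Bool.false_eq_true, Bool.true_eq_false, if_true, if_false,
        ite_true, ite_false, hT']
      rw [hr1]
      field_simp [hτ]
      ring_nf
      have hd1 : τ i ^ d * (τ i)⁻¹ ^ d = 1 := by rw [← mul_pow, mul_inv_cancel₀ hτ, one_pow]
      linear_combination ((τ i)⁻¹ ^ (r - (i : ℕ)) * (τ i)⁻¹ ^ c * (T i)⁻¹) * hd1
  rw [hD, hP, ← mul_div_assoc, ← mul_assoc, hsign]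
end
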